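/- Let B be a category and Φ : B ⥤ Cat a functor. The forgetful functor Grothendieck.forget Φ : Grothendieck Φ ⥤ B (which is always a Grothendieck opfibration) is a Grothendieck fibration if and only if, for every morphism u : a → b of B, the functor Φ u : Φ a ⥤ Φ b has a right adjoint. -/

import Mathlib

open CategoryTheory

universe v u v₁ u₁

namespace DiagPaper

variable {E : Type u₂} [Category.{v₂} E] {B : Type u₃} [Category.{v₃} B]

/-- `f : x ⟶ y` is a `P`-cartesian morphism: every `h : z ⟶ y` together with a
factorization `w` of `P h` through `P f` lifts uniquely. -/
def IsCartesianHom (P : E ⥤ B) {x y : E} (f : x ⟶ y) : Prop :=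
  ∀ (z : E) (h : z ⟶ y) (w : P.obj z ⟶ P.obj x),
    w ≫ P.map f = P.map h → ∃! t : z ⟶ x, t ≫ f = h ∧ P.map t = w

/-- `P` is a (cloven) Grothendieck fibration: every `u : a ⟶ P y` admits a `P`-cartesian
lift at `y`. -/
def IsGFibration (P : E ⥤ B) : Prop :=
  ∀ (y : E) (a : B) (u : a ⟶ P.obj y),
    ∃ (x : E) (f : x ⟶ y) (hx : P.obj x = a),
      IsCartesianHom P f ∧ P.map f = eqToHom hx ≫ u

lemma fiber_congr {B : Type u₁} [Category.{v₁} B] {Φ : B ⥤ Cat.{v, v}}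
    {X Y : Grothendieck Φ} {f g : X ⟶ Y} (h : f = g) :
    f.fiber = eqToHom (by rw [h]) ≫ g.fiber := by subst h; simp

/-- **Peschke–Tholen, Theorem 9.3 / Corollary 9.7 (indexed form).**  For `Φ : B ⥤ Cat`,
the canonical opfibration `Grothendieck.forget Φ : Grothendieck Φ ⥤ B` is a Grothendieck
fibration if and only if every transition functor `Φ u : Φ a ⥤ Φ b` has a right adjoint. -/
theorem grothendieck_forget_isFibration_iff_right_adjoints
    {B : Type u₁} [Category.{v₁} B] (Φ : B ⥤ Cat.{v, v}) :
    IsGFibration (Grothendieck.forget Φ) ↔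
      ∀ {a b : B} (u : a ⟶ b),
        Functor.IsLeftAdjoint (Φ.map u : (Φ.obj a : Cat) ⟶ Φ.obj b).toFunctor := by
  constructor
  · intro hfib a b u
    suffices h : ∀ A, Limits.HasTerminal (CostructuredArrow (Φ.map u).toFunctor A) by
      exact @isLeftAdjoint_of_costructuredArrowTerminals _ _ _ _ _ h
    intro y₀
    obtain ⟨x, f, hx, cart, hPf⟩ := hfib ⟨b, y₀⟩ a u
    dsimp [Grothendieck.forget] at hx hPf
    subst hx
    simp only [eqToHom_refl, Category.id_comp] at hPf
    obtain ⟨fb, ffib⟩ := f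
    dsimp at hPf ffib
    subst hPf
    have hne : ∀ Z : CostructuredArrow (Φ.map fb).toFunctor y₀,
        Nonempty (Z ⟶ CostructuredArrow.mk ffib) := by
      intro Z
      obtain ⟨t, ⟨htf, htb⟩, -⟩ := cart ⟨x.base, Z.left⟩ ⟨fb, Z.hom⟩ (𝟙 x.base)
        (by simp [Grothendieck.forget])
      dsimp [Grothendieck.forget] at htb
      have hf2 := fiber_congr htf
      simp only [Grothendieck.comp_fiber] at hf2
      rw [eqToHom_comp_iff] at hf2
      refine ⟨CostructuredArrow.homMk (eqToHom (by rw [htb]; simp) ≫ t.fiber) ?_⟩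
      dsimp
      rw [Functor.map_comp, eqToHom_map, Category.assoc, hf2]
      simp
      erw [eqToHom_trans_assoc, eqToHom_trans_assoc, eqToHom_refl, Category.id_comp]
    have hss : ∀ Z : CostructuredArrow (Φ.map fb).toFunctor y₀,
        Subsingleton (Z ⟶ CostructuredArrow.mk ffib) := by
      intro Z
      constructor
      intro m n
      obtain ⟨t, -, huniq⟩ := cart ⟨x.base, Z.left⟩ ⟨fb, Z.hom⟩ (𝟙 x.base)
        (by simp [Grothendieck.forget])
      have key : ∀ p : Z ⟶ CostructuredArrow.mk ffib,
          (⟨𝟙 x.base, eqToHom (by simp) ≫ p.left⟩ : (⟨x.base, Z.left⟩ : Grothendieck Φ) ⟶ x) = t := by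
        intro p
        refine huniq _ ⟨?_, by simp [Grothendieck.forget]⟩
        apply Grothendieck.ext
        case w_base => simp
        case w_fiber =>
          have hw := CostructuredArrow.w p
          simp only [CostructuredArrow.mk_hom_eq_self] at hw
          dsimp
          simp only [Grothendieck.comp_fiber, Functor.map_comp, eqToHom_map]
          simp [hw]
          erw [eqToHom_trans_assoc, eqToHom_trans_assoc, eqToHom_refl, Category.id_comp]
      have heq := (key m).trans (key n).symm
      have hfib2 := fiber_congr heq
      simp only [eqToHom_refl, Category.id_comp] at hfib2
      exact CostructuredArrow.hom_ext _ _ ((cancel_epi _).mp hfib2)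
    haveI := hne; haveI := hss
    exact Limits.hasTerminal_of_unique (CostructuredArrow.mk ffib)
  · intro hadj y a (u : a ⟶ y.base)
    haveI := hadj u
    have adj : (Φ.map u).toFunctor ⊣ (Φ.map u).toFunctor.rightAdjoint := Adjunction.ofIsLeftAdjoint _
    refine ⟨⟨a, (Φ.map u).toFunctor.rightAdjoint.obj y.fiber⟩, ⟨u, adj.counit.app y.fiber⟩, rfl,
      ?_, by exact (Category.id_comp u).symm⟩
    intro z h (w : z.base ⟶ a) hw
    dsimp [Grothendieck.forget] at hw
    have e : (Φ.map u).toFunctor.obj ((Φ.map w).toFunctor.obj z.fiber) = (Φ.map h.base).toFunctor.obj z.fiber := by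
      rw [← hw, Φ.map_comp]; rfl
    refine ⟨⟨w, (adj.homEquiv _ _) (eqToHom e ≫ h.fiber)⟩, ⟨?_, rfl⟩, ?_⟩
    · apply Grothendieck.ext
      case w_base => exact hw
      case w_fiber =>
        simp only [Grothendieck.comp_fiber]
        rw [← Adjunction.homEquiv_counit, Equiv.symm_apply_apply]
        simp
        erw [eqToHom_trans_assoc, eqToHom_trans_assoc, eqToHom_refl, Category.id_comp]
    · rintro t' ⟨ht'f, ht'b⟩
      dsimp [Grothendieck.forget] at ht'b
      apply Grothendieck.ext
      case w_base => exact ht'b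
      case w_fiber =>
        rw [← Equiv.symm_apply_eq, Adjunction.homEquiv_counit]
        have hf := fiber_congr ht'f
        simp only [Grothendieck.comp_fiber] at hf
        rw [eqToHom_comp_iff] at hf
        rw [Functor.map_comp, eqToHom_map, Category.assoc, hf]
        simp
        erw [eqToHom_trans_assoc, eqToHom_trans_assoc]


end DiagPaper
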